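/- arXiv:1204.6661 — 4 statements merged into one kernel-verified Lean document; each statement's English description precedes it below -/
import Mathlib

section
/- Let $A$ be a reduced Noetherian ring, $\mathfrak{p} \subset A$ a minimal prime ideal, and $\psi: \mathfrak{p} \to A/\mathfrak{p}$ an $A$-module homomorphism. Then $\psi = 0$. -/
/-!
Every element `x` of a minimal prime `p` becomes nilpotent in `A_p`, whose only prime is `pA_p`;
in a reduced ring this means `s * x = 0` for some `s ∉ p`. Then `s • ψ x = ψ (s • x) = 0`, and
`s` acts injectively on the domain `A ⧸ p`.
-/

theorem Ideal.exists_notMem_mul_pow_eq_zero_of_mem_minimalPrimes {A : Type*} [CommRing A]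
    {p : Ideal A} (hp : p ∈ minimalPrimes A) {x : A} (hx : x ∈ p) :
    ∃ s ∉ p, ∃ n : ℕ, s * x ^ n = 0 := by
  have := hp.1.1
  have := Ring.KrullDimLE.of_isLocalization p hp (Localization.AtPrime p)
  obtain ⟨n, hn⟩ : IsNilpotent (algebraMap A (Localization.AtPrime p) x) :=
    Ring.KrullDimLE.isNilpotent_iff_mem_maximalIdeal.mpr
      ((IsLocalization.AtPrime.to_map_mem_maximal_iff _ p x).mpr hx)
  rw [← map_pow, IsLocalization.map_eq_zero_iff p.primeCompl] at hn
  obtain ⟨⟨s, hs⟩, hsx⟩ := hn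
  exact ⟨s, hs, n, hsx⟩

theorem Ideal.exists_notMem_mul_eq_zero_of_mem_minimalPrimes {A : Type*} [CommRing A]
    [IsReduced A] {p : Ideal A} (hp : p ∈ minimalPrimes A) {x : A} (hx : x ∈ p) :
    ∃ s ∉ p, s * x = 0 := by
  obtain ⟨s, hs, n, hsx⟩ := exists_notMem_mul_pow_eq_zero_of_mem_minimalPrimes hp hx
  refine ⟨s, hs, IsReduced.eq_zero _ ⟨n + 1, ?_⟩⟩
  linear_combination s ^ n * x * hsx

theorem Ideal.Quotient.smul_eq_zero_iff_of_notMem {A : Type*} [CommRing A] {p : Ideal A}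
    [p.IsPrime] {s : A} (hs : s ∉ p) {y : A ⧸ p} : s • y = 0 ↔ y = 0 := by
  rw [Algebra.smul_def, mul_eq_zero, Ideal.Quotient.algebraMap_eq, Ideal.Quotient.eq_zero_iff_mem]
  simp [hs]

theorem hom_minimal_prime_to_quotient_eq_zero_general
    (A : Type*) [CommRing A] [IsReduced A]
    (p : Ideal A) (hp : p ∈ minimalPrimes A)
    (ψ : p →ₗ[A] A ⧸ p) :
    ψ = 0 := by
  have := hp.1.1
  ext ⟨x, hx⟩
  obtain ⟨s, hs, hsx⟩ := p.exists_notMem_mul_eq_zero_of_mem_minimalPrimes hp hx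
  have hψ : s • ψ ⟨x, hx⟩ = 0 := by
    rw [← map_smul, show s • (⟨x, hx⟩ : p) = 0 from Subtype.ext hsx, map_zero]
  exact (Ideal.Quotient.smul_eq_zero_iff_of_notMem hs).mp hψ

/-- **Lemma.** Let `A` be a reduced Noetherian ring, `p ⊆ A` a minimal prime ideal and
`ψ : p → A/p` an `A`-module homomorphism. Then `ψ = 0`. -/
theorem hom_minimal_prime_to_quotient_eq_zero
    (A : Type*) [CommRing A] [IsReduced A] [IsNoetherianRing A]
    (p : Ideal A) (hp : p ∈ minimalPrimes A)
    (ψ : p →ₗ[A] A ⧸ p) :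
    ψ = 0 :=
  hom_minimal_prime_to_quotient_eq_zero_general A p hp ψ
end

section
/- Let $(R,\mathfrak{m})$ be a local Artin ring with residue field $k$ and let $F_1 \subseteq F$ be two finitely generated free $R$-modules. Then the quotient $F/F_1$ is a free $R$-module. -/
/-!
A finite presentation `F₁ → F → F/F₁ → 0` of `F/F₁` over a local ring with `F` free has free
cokernel as soon as `k ⊗ F₁ → k ⊗ F` is injective, i.e. as soon as `F₁ ∩ 𝔪F = 𝔪F₁`.
Over an Artinian local ring `𝔪` is an associated prime of `R`, so some `c ≠ 0` kills `𝔪`.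
If `x ∈ F₁ ∩ 𝔪F`, then `c • x = 0`, so every coordinate of `x` in a basis of `F₁` is a zero
divisor, hence lies in `𝔪`, and `x ∈ 𝔪F₁`.
-/

open IsLocalRing TensorProduct

theorem IsArtinianRing.exists_ne_zero_forall_mem_maximalIdeal_mul_eq_zero (R : Type*)
    [CommRing R] [IsLocalRing R] [IsArtinianRing R] :
    ∃ c : R, c ≠ 0 ∧ ∀ m ∈ maximalIdeal R, m * c = 0 := by
  obtain ⟨P, hP⟩ := associatedPrimes.nonempty R R
  obtain ⟨hPprime, c, rfl⟩ := isAssociatedPrime_iff.mp hP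
  have hmax : (⊥ : Submodule R R).colon {c} = maximalIdeal R :=
    eq_maximalIdeal (IsArtinianRing.isMaximal_of_isPrime _)
  refine ⟨c, ?_, fun m hm ↦ ?_⟩
  · rintro rfl
    exact hPprime.ne_top <|
      Ideal.eq_top_of_isUnit_mem _ (by simp [Submodule.mem_colon_singleton]) isUnit_one
  · rw [← hmax] at hm
    simpa [Submodule.mem_colon_singleton] using hm

theorem Module.Free.mem_maximalIdeal_smul_top_of_smul_eq_zero {R M : Type*} [CommRing R]
    [IsLocalRing R] [AddCommGroup M] [Module R M] [Module.Free R M] {c : R} (hc : c ≠ 0) {x : M}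
    (hx : c • x = 0) : x ∈ maximalIdeal R • (⊤ : Submodule R M) := by
  let b := Module.Free.chooseBasis R M
  have hcoord : ∀ i, b.repr x i ∈ maximalIdeal R := fun i hunit ↦ hc <| by
    have : c * b.repr x i = 0 := by simpa using congr($(congrArg b.repr hx) i)
    simpa using hunit.mul_left_eq_zero.mp this
  rw [← b.span_eq, Submodule.mem_ideal_smul_span_iff_exists_sum]
  exact ⟨b.repr x, hcoord,
    by simpa [Finsupp.linearCombination_apply] using b.linearCombination_repr x⟩

theorem Submodule.smul_eq_zero_of_mem_smul_top {R M : Type*} [CommRing R] [AddCommGroup M]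
    [Module R M] {I : Ideal R} {c : R} (hc : ∀ m ∈ I, m * c = 0) {x : M}
    (hx : x ∈ I • (⊤ : Submodule R M)) : c • x = 0 := by
  refine Submodule.smul_induction_on hx (fun m hm y _ ↦ ?_) (fun y z hy hz ↦ ?_)
  · rw [smul_smul, mul_comm, hc m hm, zero_smul]
  · rw [smul_add, hy, hz, add_zero]

theorem LinearMap.lTensor_quotient_injective_iff {R M N : Type*} [CommRing R] [AddCommGroup M]
    [Module R M] [AddCommGroup N] [Module R N] (I : Ideal R) (f : M →ₗ[R] N) :
    Function.Injective (f.lTensor (R ⧸ I)) ↔ (I • ⊤ : Submodule R N).comap f ≤ I • ⊤ := by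
  have hcompat : f.lTensor (R ⧸ I) = (quotTensorEquivQuotSMul N I).symm ∘ₗ
      (I • ⊤ : Submodule R M).mapQ (I • ⊤) f (Submodule.smul_top_le_comap_smul_top I f) ∘ₗ
      (quotTensorEquivQuotSMul M I) := by
    ext x
    obtain ⟨r, rfl⟩ := Ideal.Quotient.mk_surjective x
    simp [smul_tmul', Algebra.smul_def]
  rw [hcompat, LinearMap.coe_comp, LinearMap.coe_comp, LinearEquiv.coe_coe, LinearEquiv.coe_coe,
    EquivLike.comp_injective, EquivLike.injective_comp, ← LinearMap.ker_eq_bot,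
    Submodule.ker_mapQ, ← le_bot_iff, Submodule.map_le_iff_le_comap, Submodule.comap_bot,
    Submodule.ker_mkQ]

theorem IsArtinianRing.comap_maximalIdeal_smul_top_le_of_injective {R M N : Type*} [CommRing R]
    [IsLocalRing R] [IsArtinianRing R] [AddCommGroup M] [Module R M] [Module.Free R M]
    [AddCommGroup N] [Module R N] {f : M →ₗ[R] N} (hf : Function.Injective f) :
    (maximalIdeal R • ⊤ : Submodule R N).comap f ≤ maximalIdeal R • ⊤ := by
  obtain ⟨c, hc0, hc⟩ := exists_ne_zero_forall_mem_maximalIdeal_mul_eq_zero R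
  intro x hx
  refine Module.Free.mem_maximalIdeal_smul_top_of_smul_eq_zero hc0 (hf ?_)
  rw [map_smul, map_zero]
  exact Submodule.smul_eq_zero_of_mem_smul_top hc hx

/-- **Lemma.** Let `(R, 𝔪)` be a local Artin ring and `F₁ ⊆ F` two finitely generated free
`R`-modules. Then `F/F₁` is a free `R`-module. -/
theorem quotient_of_free_submodule_free
    (R : Type*) [CommRing R] [IsLocalRing R] [IsArtinianRing R]
    (F : Type*) [AddCommGroup F] [Module R F] [Module.Finite R F] [Module.Free R F]
    (F₁ : Submodule R F) [Module.Finite R F₁] [Module.Free R F₁] :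
    Module.Free R (F ⧸ F₁) := by
  refine Module.free_of_lTensor_residueField_injective F₁.subtype F₁.mkQ F₁.mkQ_surjective
    (LinearMap.exact_subtype_mkQ F₁) ?_
  exact (F₁.subtype.lTensor_quotient_injective_iff (maximalIdeal R)).mpr
    (IsArtinianRing.comap_maximalIdeal_smul_top_le_of_injective F₁.injective_subtype)
end

section
/- Let $(R,\mathfrak{m})$ be a local Artin ring with residue field $k$ and let $F_1 \subseteq F$ be two finitely generated free $R$-modules. Then the induced map $F_1 \otimes_R k \to F \otimes_R k$ is injective. -/
/-- **Lemma.** Let `(R, 𝔪)` be a local Artin ring with residue field `k = R/𝔪` and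
`F₁ ⊆ F` two finitely generated free `R`-modules. Then the induced map
`F₁ ⊗_R k → F ⊗_R k` is injective. -/
theorem free_submodule_tensor_residue_injective
    (R : Type*) [CommRing R] [IsLocalRing R] [IsArtinianRing R]
    (F : Type*) [AddCommGroup F] [Module R F] [Module.Finite R F] [Module.Free R F]
    (F₁ : Submodule R F) [Module.Finite R F₁] [Module.Free R F₁] :
    Function.Injective
      (LinearMap.lTensor (R ⧸ IsLocalRing.maximalIdeal R) F₁.subtype) := by
  set m := IsLocalRing.maximalIdeal R with hm_def
  -- a socle element
  obtain ⟨s, hs0, hsm⟩ : ∃ s : R, s ≠ 0 ∧ ∀ c ∈ m, s * c = 0 := by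
    by_cases hm : m = ⊥
    · exact ⟨1, one_ne_zero, fun c hc => by
        rw [hm] at hc; simp [Ideal.mem_bot.mp hc]⟩
    · have hnil : IsNilpotent m := by
        rw [hm_def, ← IsLocalRing.jacobson_eq_maximalIdeal ⊥ bot_ne_top]
        exact IsArtinianRing.isNilpotent_jacobson_bot
      obtain ⟨n, hn⟩ := hnil
      classical
      have hP : ∃ n, m ^ n = ⊥ := ⟨n, hn⟩
      set N := Nat.find hP with hN
      have hNz : m ^ N = ⊥ := Nat.find_spec hP
      have hN1 : N ≠ 0 := by
        intro h
        rw [h, pow_zero, Ideal.one_eq_top] at hNz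
        exact one_ne_zero ((Submodule.eq_bot_iff _).mp hNz 1 Submodule.mem_top)
      have hprev : m ^ (N - 1) ≠ ⊥ := Nat.find_min hP (by omega)
      obtain ⟨s, hs, hs0⟩ := Submodule.exists_mem_ne_zero_of_ne_bot hprev
      refine ⟨s, hs0, fun c hc => ?_⟩
      have : s * c ∈ m ^ (N - 1) * m := Ideal.mul_mem_mul hs hc
      rw [← pow_succ] at this
      rw [Nat.sub_add_cancel (by omega), hNz] at this
      exact Ideal.mem_bot.mp this
  -- key lemma
  have key : ∀ x : F₁, (x : F) ∈ m • (⊤ : Submodule R F) →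
      x ∈ m • (⊤ : Submodule R F₁) := by
    intro x hx
    by_contra hnot
    let b := Module.Free.chooseBasis R F₁
    have hall : ¬ ∀ i, b.repr x i ∈ m := by
      intro hall
      apply hnot
      rw [← b.linearCombination_repr x, Finsupp.linearCombination_apply]
      exact Submodule.sum_mem _ fun i _ =>
        Submodule.smul_mem_smul (hall i) Submodule.mem_top
    obtain ⟨i, hi⟩ := not_forall.mp hall
    have hunit : IsUnit (b.repr x i) := by
      by_contra h
      exact hi (IsLocalRing.mem_maximalIdeal _ |>.mpr h)
    have hsx : s • (x : F) = 0 := by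
      refine Submodule.smul_induction_on hx (fun r hr n _ => ?_) (fun y z hy hz => ?_)
      · rw [smul_smul, hsm r hr, zero_smul]
      · rw [smul_add, hy, hz, add_zero]
    have hsx' : s • x = 0 := by
      have := Submodule.coe_smul_of_tower s x ▸ hsx
      exact Subtype.ext (by simpa using hsx)
    have : s * b.repr x i = 0 := by
      have := congrArg (fun y => b.repr y i) hsx'
      simpa [smul_eq_mul] using this
    exact hs0 (by
      obtain ⟨u, hu⟩ := hunit
      have := congrArg (fun t => t * (↑u⁻¹ : R)) this
      simpa [← hu, mul_assoc] using this)
  -- the commuting diagram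
  have hle : m • (⊤ : Submodule R F₁) ≤
      Submodule.comap F₁.subtype (m • (⊤ : Submodule R F)) := by
    rw [← Submodule.map_le_iff_le_comap, Submodule.map_smul'']
    exact smul_mono_right m le_top
  set q := Submodule.mapQ (m • (⊤ : Submodule R F₁)) (m • (⊤ : Submodule R F))
    F₁.subtype hle with hq
  have hcomm : (TensorProduct.quotTensorEquivQuotSMul F m).toLinearMap ∘ₗ
      LinearMap.lTensor (R ⧸ m) F₁.subtype =
      q ∘ₗ (TensorProduct.quotTensorEquivQuotSMul F₁ m).toLinearMap := by
    refine TensorProduct.ext' fun r x => ?_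
    obtain ⟨r, rfl⟩ := Ideal.Quotient.mk_surjective r
    simp [TensorProduct.quotTensorEquivQuotSMul_mk_tmul, hq, Submodule.mapQ_apply]
  have hqinj : Function.Injective q := by
    intro a c hac
    obtain ⟨x, rfl⟩ := Submodule.Quotient.mk_surjective _ a
    obtain ⟨y, rfl⟩ := Submodule.Quotient.mk_surjective _ c
    rw [hq, Submodule.mapQ_apply, Submodule.mapQ_apply] at hac
    rw [Submodule.Quotient.eq] at hac ⊢
    exact key _ (by simpa using hac)
  have : LinearMap.lTensor (R ⧸ m) F₁.subtype =
      (TensorProduct.quotTensorEquivQuotSMul F m).symm.toLinearMap ∘ₗ q ∘ₗ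
        (TensorProduct.quotTensorEquivQuotSMul F₁ m).toLinearMap := by
    rw [← hcomm]; ext z; simp
  rw [this]
  exact (TensorProduct.quotTensorEquivQuotSMul F m).symm.injective.comp
    (hqinj.comp (TensorProduct.quotTensorEquivQuotSMul F₁ m).injective)
end

section
/- Let $(R,\mathfrak{m})$ be a local Artin ring with residue field $k$, and $F_1, F_2 \subseteq F$ two free submodules of a finitely generated free $R$-module $F$. Then $F_1 \cap F_2 = 0$ if and only if $(F_1 \otimes_R k) \cap (F_2 \otimes_R k) = 0$ inside $F \otimes_R k$. -/
open IsLocalRing TensorProduct LinearMap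

section Aux

variable {R : Type*} [CommRing R] [IsLocalRing R] [IsArtinianRing R]

/-- In a nontrivial Artinian local ring there is a nonzero element annihilating the
maximal ideal (a socle element). -/
lemma aux_exists_socle [Nontrivial R] :
    ∃ s : R, s ≠ 0 ∧ ∀ a ∈ maximalIdeal R, s * a = 0 := by
  have hnil : IsNilpotent (maximalIdeal R) := by
    have := IsArtinianRing.isNilpotent_jacobson_bot (R := R)
    rwa [IsLocalRing.jacobson_eq_maximalIdeal (⊥ : Ideal R) bot_ne_top] at this
  obtain ⟨n, hn⟩ := hnil
  have hP : ∃ m, (maximalIdeal R) ^ m = ⊥ := ⟨n, hn⟩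
  classical
  set m := Nat.find hP with hm
  have hmspec : (maximalIdeal R) ^ m = ⊥ := Nat.find_spec hP
  have hm0 : m ≠ 0 := by
    intro h
    rw [h, pow_zero, Ideal.one_eq_top] at hmspec
    exact top_ne_bot hmspec
  have hprev : (maximalIdeal R) ^ (m - 1) ≠ ⊥ := by
    intro h
    exact Nat.find_min hP (Nat.sub_lt (Nat.pos_of_ne_zero hm0) one_pos) h
  obtain ⟨s, hs_mem, hs_ne⟩ := Submodule.exists_mem_ne_zero_of_ne_bot hprev
  refine ⟨s, hs_ne, fun a ha => ?_⟩
  have : s * a ∈ (maximalIdeal R) ^ m := by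
    have : (maximalIdeal R) ^ m = (maximalIdeal R) ^ (m - 1) * maximalIdeal R := by
      conv_lhs => rw [show m = (m - 1) + 1 from (Nat.succ_pred_eq_of_pos
        (Nat.pos_of_ne_zero hm0)).symm]
      rw [pow_succ]
    rw [this]
    exact Ideal.mul_mem_mul hs_mem ha
  rw [hmspec] at this
  exact this

/-- A free submodule `N` of a module over an Artinian local ring satisfies
`N ⊓ 𝔪•F = 𝔪•N`. -/
lemma aux_inf_smul_top_le {F : Type*} [AddCommGroup F] [Module R F]
    (N : Submodule R F) [Module.Free R N] :
    N ⊓ (maximalIdeal R • ⊤ : Submodule R F) ≤ maximalIdeal R • N := by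
  rcases subsingleton_or_nontrivial R with hR | hR
  · haveI : Subsingleton F := Module.subsingleton R F
    intro x _
    rw [Subsingleton.elim x 0]
    exact Submodule.zero_mem _
  rintro x ⟨hxN, hxm⟩
  obtain ⟨s, hs0, hs⟩ := aux_exists_socle (R := R)
  by_contra hxI
  set b := Module.Free.chooseBasis R N with hb
  set n : N := ⟨x, hxN⟩ with hn
  have hcoef : ¬ ∀ i, b.repr n i ∈ maximalIdeal R := by
    intro hall
    apply hxI
    rw [← Submodule.mem_smul_top_iff (maximalIdeal R) N n]
    have hrepr := b.linearCombination_repr n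
    rw [Finsupp.linearCombination_apply, Finsupp.sum] at hrepr
    rw [← hrepr]
    exact Submodule.sum_mem _ fun i _ =>
      Submodule.smul_mem_smul (hall i) trivial
  push_neg at hcoef
  obtain ⟨i₀, hi₀⟩ := hcoef
  have hu : IsUnit (b.repr n i₀) := by
    by_contra hcon
    exact hi₀ ((IsLocalRing.mem_maximalIdeal _).mpr hcon)
  have hsx : s • x = 0 := by
    refine Submodule.smul_induction_on hxm (fun r hr y _ => ?_) (fun y z hy hz => ?_)
    · rw [smul_smul, hs r hr, zero_smul]
    · rw [smul_add, hy, hz, add_zero]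
  have hsn : s • n = 0 := Subtype.ext (by simpa using hsx)
  have hrep : s * b.repr n i₀ = 0 := by
    have := congrArg (fun z => b.repr z i₀) hsn
    simpa [smul_eq_mul] using this
  obtain ⟨u, hu'⟩ := hu
  apply hs0
  have : s * b.repr n i₀ * ((u⁻¹ : Rˣ) : R) = 0 := by rw [hrep, zero_mul]
  rwa [mul_assoc, ← hu', Units.mul_inv, mul_one] at this

/-- **The previous lemma**: for a free submodule `N` of a free module `F` over an
Artinian local ring, the map `N ⊗ k → F ⊗ k` is injective. -/
lemma aux_lTensor_subtype_injective {F : Type*} [AddCommGroup F] [Module R F]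
    (N : Submodule R F) [Module.Free R N] :
    Function.Injective (LinearMap.lTensor (R ⧸ maximalIdeal R) N.subtype) := by
  set I := maximalIdeal R with hI
  have hle : (I • ⊤ : Submodule R N) ≤ Submodule.comap N.subtype (I • ⊤ : Submodule R F) := by
    intro n hn
    have : (n : F) ∈ I • N := (Submodule.mem_smul_top_iff I N n).mp hn
    exact Submodule.smul_mono le_rfl le_top this
  set g := Submodule.mapQ (I • ⊤ : Submodule R N) (I • ⊤ : Submodule R F) N.subtype hle with hg
  have hginj : Function.Injective g := by
    rw [← LinearMap.ker_eq_bot, eq_bot_iff]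
    intro z hz
    obtain ⟨n, rfl⟩ := Submodule.Quotient.mk_surjective _ z
    have hz' : g (Submodule.Quotient.mk n) = Submodule.Quotient.mk (N.subtype n) := by
      rw [hg, Submodule.mapQ_apply]
    rw [LinearMap.mem_ker, hz', Submodule.Quotient.mk_eq_zero] at hz
    have : (n : F) ∈ I • N := aux_inf_smul_top_le N ⟨n.2, hz⟩
    rw [Submodule.mem_bot, Submodule.Quotient.mk_eq_zero]
    exact (Submodule.mem_smul_top_iff I N n).mpr this
  have key : ∀ t, (quotTensorEquivQuotSMul F I) (LinearMap.lTensor (R ⧸ I) N.subtype t) =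
      g ((quotTensorEquivQuotSMul N I) t) := by
    intro t
    induction t using TensorProduct.induction_on with
    | zero => simp
    | tmul c y =>
      obtain ⟨r, rfl⟩ := Ideal.Quotient.mk_surjective c
      rw [LinearMap.lTensor_tmul, quotTensorEquivQuotSMul_mk_tmul,
        quotTensorEquivQuotSMul_mk_tmul, hg, Submodule.mapQ_apply]
      rfl
    | add x y hx hy => simp only [map_add, hx, hy]
  intro a b hab
  apply (quotTensorEquivQuotSMul N I).injective
  apply hginj
  rw [← key, ← key, hab]

end Aux

/-- **Corollary.** Let `(R, 𝔪)` be a local Artin ring with residue field `k` and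
`F₁, F₂ ⊆ F` two free submodules of a finitely generated free `R`-module `F`. Then
`F₁ ∩ F₂ = 0` if and only if `(F₁ ⊗ k) ∩ (F₂ ⊗ k) = 0` inside `F ⊗ k` (i.e. the images
of `F₁ ⊗ k` and `F₂ ⊗ k` in `F ⊗ k` intersect trivially). -/
theorem free_submodules_inter_bot_iff_residue
    (R : Type*) [CommRing R] [IsLocalRing R] [IsArtinianRing R]
    (F : Type*) [AddCommGroup F] [Module R F] [Module.Finite R F] [Module.Free R F]
    (F₁ F₂ : Submodule R F)
    [Module.Finite R F₁] [Module.Free R F₁] [Module.Finite R F₂] [Module.Free R F₂] :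
    F₁ ⊓ F₂ = ⊥ ↔
      LinearMap.range (LinearMap.lTensor (R ⧸ IsLocalRing.maximalIdeal R) F₁.subtype) ⊓
        LinearMap.range (LinearMap.lTensor (R ⧸ IsLocalRing.maximalIdeal R) F₂.subtype)
        = ⊥ := by
  set k := R ⧸ IsLocalRing.maximalIdeal R with hk
  set f : (F₁ × F₂) →ₗ[R] F := F₁.subtype.coprod F₂.subtype with hf
  have hf_inl : f ∘ₗ LinearMap.inl R F₁ F₂ = F₁.subtype := by ext x; simp [hf]
  have hf_inr : f ∘ₗ LinearMap.inr R F₁ F₂ = F₂.subtype := by ext x; simp [hf]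
  constructor
  · -- forward direction
    intro h
    have hinj : Function.Injective f := by
      rw [← LinearMap.ker_eq_bot, eq_bot_iff]
      rintro ⟨a, b⟩ hab
      have hab' : (a : F) + b = 0 := hab
      have haF : (a : F) ∈ F₁ ⊓ F₂ := by
        refine ⟨a.2, ?_⟩
        have : (a : F) = -(b : F) := eq_neg_of_add_eq_zero_left hab'
        rw [this]
        exact F₂.neg_mem b.2
      rw [h, Submodule.mem_bot] at haF
      have hbF : (b : F) = 0 := by
        have := hab'
        rw [haF, zero_add] at this
        exact this
      simp only [Submodule.mem_bot, Prod.mk_eq_zero]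
      exact ⟨Subtype.ext haF, Subtype.ext hbF⟩
    have hrange : LinearMap.range f = F₁ ⊔ F₂ := by
      rw [hf, LinearMap.range_coprod, Submodule.range_subtype, Submodule.range_subtype]
    let e : (F₁ × F₂) ≃ₗ[R] (F₁ ⊔ F₂ : Submodule R F) :=
      (LinearEquiv.ofInjective f hinj).trans (LinearEquiv.ofEq _ _ hrange)
    haveI : Module.Free R (F₁ ⊔ F₂ : Submodule R F) := Module.Free.of_equiv e
    have he_inl : (F₁ ⊔ F₂ : Submodule R F).subtype ∘ₗ (e.toLinearMap ∘ₗ LinearMap.inl R F₁ F₂) =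
        F₁.subtype := by
      ext x
      simp [e, hf]
    have he_inr : (F₁ ⊔ F₂ : Submodule R F).subtype ∘ₗ (e.toLinearMap ∘ₗ LinearMap.inr R F₁ F₂) =
        F₂.subtype := by
      ext x
      simp [e, hf]
    rw [eq_bot_iff]
    rintro y ⟨hy₁, hy₂⟩
    obtain ⟨t₁, rfl⟩ := hy₁
    obtain ⟨t₂, ht₂⟩ := hy₂
    -- rewrite both via the big submodule
    have h1 : LinearMap.lTensor k F₁.subtype t₁ =
        LinearMap.lTensor k (F₁ ⊔ F₂ : Submodule R F).subtype
          (LinearMap.lTensor k (e.toLinearMap ∘ₗ LinearMap.inl R F₁ F₂) t₁) := by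
      rw [← LinearMap.lTensor_comp_apply, he_inl]
    have h2 : LinearMap.lTensor k F₂.subtype t₂ =
        LinearMap.lTensor k (F₁ ⊔ F₂ : Submodule R F).subtype
          (LinearMap.lTensor k (e.toLinearMap ∘ₗ LinearMap.inr R F₁ F₂) t₂) := by
      rw [← LinearMap.lTensor_comp_apply, he_inr]
    have hNinj := aux_lTensor_subtype_injective (R := R) (F := F) (F₁ ⊔ F₂)
    have hst : LinearMap.lTensor k (e.toLinearMap ∘ₗ LinearMap.inl R F₁ F₂) t₁ =
        LinearMap.lTensor k (e.toLinearMap ∘ₗ LinearMap.inr R F₁ F₂) t₂ := by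
      apply hNinj
      rw [← h1, ← h2, ht₂]
    have hst' : LinearMap.lTensor k (LinearMap.inl R F₁ F₂) t₁ =
        LinearMap.lTensor k (LinearMap.inr R F₁ F₂) t₂ := by
      have := congrArg (LinearMap.lTensor k e.symm.toLinearMap) hst
      rwa [← LinearMap.lTensor_comp_apply, ← LinearMap.lTensor_comp_apply,
        ← LinearMap.comp_assoc, ← LinearMap.comp_assoc,
        show e.symm.toLinearMap ∘ₗ e.toLinearMap = LinearMap.id from
          LinearMap.ext fun z => e.symm_apply_apply z,
        LinearMap.id_comp, LinearMap.id_comp] at this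
    have ht₂0 : t₂ = 0 := by
      have := congrArg (LinearMap.lTensor k (LinearMap.snd R F₁ F₂)) hst'
      rw [← LinearMap.lTensor_comp_apply, ← LinearMap.lTensor_comp_apply,
        show (LinearMap.snd R F₁ F₂) ∘ₗ (LinearMap.inl R F₁ F₂) = 0 from
          LinearMap.ext fun z => rfl,
        show (LinearMap.snd R F₁ F₂) ∘ₗ (LinearMap.inr R F₁ F₂) = LinearMap.id from
          LinearMap.ext fun z => rfl,
        LinearMap.lTensor_zero, LinearMap.lTensor_id] at this
      simpa using this.symm
    rw [Submodule.mem_bot, ← ht₂, ht₂0, map_zero]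
  · -- backward direction
    intro h
    have hP₁ := aux_lTensor_subtype_injective (R := R) (F := F) F₁
    have hP₂ := aux_lTensor_subtype_injective (R := R) (F := F) F₂
    have hlt : Function.Injective (LinearMap.lTensor k f) := by
      have hker : ∀ t, LinearMap.lTensor k f t = 0 → t = 0 := by
        intro t ht
        set tl := LinearMap.lTensor k (LinearMap.fst R F₁ F₂) t with htl
        set tr := LinearMap.lTensor k (LinearMap.snd R F₁ F₂) t with htr
        have hdecomp : t = LinearMap.lTensor k (LinearMap.inl R F₁ F₂) tl +
            LinearMap.lTensor k (LinearMap.inr R F₁ F₂) tr := by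
          have hid : (LinearMap.inl R F₁ F₂) ∘ₗ (LinearMap.fst R F₁ F₂) +
              (LinearMap.inr R F₁ F₂) ∘ₗ (LinearMap.snd R F₁ F₂) = LinearMap.id := by
            ext z <;> simp
          calc t = LinearMap.lTensor k LinearMap.id t := by rw [LinearMap.lTensor_id]; rfl
            _ = _ := by
              rw [← hid, LinearMap.lTensor_add, LinearMap.add_apply,
                LinearMap.lTensor_comp, LinearMap.lTensor_comp]
              rfl
        have hsum : LinearMap.lTensor k F₁.subtype tl + LinearMap.lTensor k F₂.subtype tr = 0 := by
          have e1 : LinearMap.lTensor k f (LinearMap.lTensor k (LinearMap.inl R F₁ F₂) tl) =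
              LinearMap.lTensor k F₁.subtype tl := by
            rw [← LinearMap.lTensor_comp_apply, hf_inl]
          have e2 : LinearMap.lTensor k f (LinearMap.lTensor k (LinearMap.inr R F₁ F₂) tr) =
              LinearMap.lTensor k F₂.subtype tr := by
            rw [← LinearMap.lTensor_comp_apply, hf_inr]
          rw [← e1, ← e2, ← map_add, ← hdecomp, ht]
        have hmem : LinearMap.lTensor k F₁.subtype tl ∈
            LinearMap.range (LinearMap.lTensor k F₁.subtype) ⊓
              LinearMap.range (LinearMap.lTensor k F₂.subtype) := by
          exact ⟨⟨tl, rfl⟩, ⟨-tr, (map_neg _ tr).trans (neg_eq_of_add_eq_zero_left hsum)⟩⟩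
        rw [h, Submodule.mem_bot] at hmem
        have htl0 : tl = 0 := hP₁ (by rw [hmem, map_zero])
        have htr0 : tr = 0 := by
          apply hP₂
          rw [map_zero]
          have := hsum
          rw [hmem, zero_add] at this
          exact this
        rw [hdecomp, htl0, htr0, map_zero, map_zero, add_zero]
      intro a b hab
      have : a - b = 0 := hker _ (by rw [map_sub, hab, sub_self])
      exact sub_eq_zero.mp this
    obtain ⟨g, hg⟩ :=
      (IsLocalRing.split_injective_iff_lTensor_residueField_injective f).mpr hlt
    have hfinj : Function.Injective f := by
      intro a b hab
      have ha := LinearMap.congr_fun hg a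
      have hb := LinearMap.congr_fun hg b
      simp only [LinearMap.comp_apply, LinearMap.id_apply] at ha hb
      rw [← ha, ← hb, hab]
    rw [eq_bot_iff]
    rintro x ⟨h1, h2⟩
    have hx : f (⟨x, h1⟩, -⟨x, h2⟩) = 0 := by
      simp [hf]
    have : ((⟨x, h1⟩, -⟨x, h2⟩) : F₁ × F₂) = 0 := by
      apply hfinj
      rw [hx, map_zero]
    rw [Submodule.mem_bot]
    have := congrArg Prod.fst this
    exact congrArg Subtype.val this
end
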